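/- For all real x, 0 ≤ PTSoftplus(x) − Softplus(x) ≤ 1/ln 2 − log₂(1/ln 2), and in particular |PTSoftplus(x) − Softplus(x)| ≤ 0.914. -/
import Mathlib


noncomputable section
open Real Filter

def xc : ℝ := Real.logb 2 (1 / Real.log 2)
def Cs : ℝ := 1 / Real.log 2 - xc
def PTSoftplus (x : ℝ) : ℝ := if x < xc then (2:ℝ) ^ x else x + Cs
def softplus (x : ℝ) : ℝ := Real.log (1 + Real.exp x)

namespace FBoundsAux

lemma L_pos : (0:ℝ) < Real.log 2 := Real.log_pos one_lt_two
lemma L_lb : (0.6931471803:ℝ) < Real.log 2 := Real.log_two_gt_d9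
lemma L_ub : Real.log 2 < 0.6931471808 := Real.log_two_lt_d9

lemma rpow_eq (x : ℝ) : (2:ℝ) ^ x = Real.exp (x * Real.log 2) := by
  rw [Real.rpow_def_of_pos two_pos, mul_comm]

lemma xc_mul_L : xc * Real.log 2 = Real.log (1 / Real.log 2) := by
  unfold xc Real.logb
  field_simp

lemma rpow_xc : (2:ℝ) ^ xc = 1 / Real.log 2 := by
  rw [rpow_eq, xc_mul_L, Real.exp_log (one_div_pos.mpr L_pos)]

lemma expA : Real.exp (0.5286951 * 0.6931471808) ≤ 1 / 0.6931471808 := by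
  have h := Real.exp_bound' (x := 0.5286951 * 0.6931471808) (by norm_num) (by norm_num)
    (n := 6) (by norm_num)
  rw [show (6:ℕ).factorial = 720 from rfl] at h
  simp only [Finset.sum_range_succ, Finset.sum_range_zero] at h
  norm_num [Nat.factorial] at h ⊢
  linarith

lemma expB : Real.exp 0.53 ≤ 1.69897 := by
  have h := Real.exp_bound' (x := 0.53) (by norm_num) (by norm_num) (n := 5) (by norm_num)
  rw [show (5:ℕ).factorial = 120 from rfl] at h
  simp only [Finset.sum_range_succ, Finset.sum_range_zero] at h
  norm_num [Nat.factorial] at h ⊢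
  linarith

lemma expC : (0.8185:ℝ) ≤ Real.exp (-0.2) := by
  have h := Real.exp_bound' (x := 0.2) (by norm_num) (by norm_num) (n := 4) (by norm_num)
  rw [show (4:ℕ).factorial = 24 from rfl] at h
  simp only [Finset.sum_range_succ, Finset.sum_range_zero] at h
  norm_num [Nat.factorial] at h
  have hpos : (0:ℝ) < Real.exp 0.2 := Real.exp_pos _
  rw [Real.exp_neg]
  have hc := mul_inv_cancel₀ (ne_of_gt hpos)
  nlinarith [inv_pos.mpr hpos]

lemma expD : Real.exp (-(0.2 * 0.6931471803)) ≤ 0.8711 := by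
  have h := Real.sum_le_exp_of_nonneg (x := 0.2 * 0.6931471803) (by norm_num) 3
  simp only [Finset.sum_range_succ, Finset.sum_range_zero] at h
  norm_num [Nat.factorial] at h
  have hpos : (0:ℝ) < Real.exp (0.2 * 0.6931471803) := Real.exp_pos _
  rw [Real.exp_neg]
  have hc := mul_inv_cancel₀ (ne_of_gt hpos)
  nlinarith [inv_pos.mpr hpos]

lemma expE : (1:ℝ) / 0.6931471803 ≤ Real.exp (0.53 * 0.6931471803) := by
  have h := Real.sum_le_exp_of_nonneg (x := 0.53 * 0.6931471803) (by norm_num) 5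
  simp only [Finset.sum_range_succ, Finset.sum_range_zero] at h
  norm_num [Nat.factorial] at h ⊢
  linarith

lemma xc_ub : xc ≤ 0.53 := by
  have h1 : Real.log (1 / Real.log 2) ≤ 0.53 * Real.log 2 := by
    rw [Real.log_le_iff_le_exp (one_div_pos.mpr L_pos)]
    calc (1:ℝ) / Real.log 2 ≤ 1 / 0.6931471803 :=
          one_div_le_one_div_of_le (by norm_num) L_lb.le
      _ ≤ Real.exp (0.53 * 0.6931471803) := expE
      _ ≤ Real.exp (0.53 * Real.log 2) := Real.exp_le_exp.2 (by nlinarith [L_lb])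
  rw [← xc_mul_L] at h1
  exact le_of_mul_le_mul_right h1 L_pos

lemma xc_lb : (0.5286951:ℝ) ≤ xc := by
  have h1 : 0.5286951 * Real.log 2 ≤ Real.log (1 / Real.log 2) := by
    rw [Real.le_log_iff_exp_le (one_div_pos.mpr L_pos)]
    calc Real.exp (0.5286951 * Real.log 2)
        ≤ Real.exp (0.5286951 * 0.6931471808) := Real.exp_le_exp.2 (by nlinarith [L_ub])
      _ ≤ 1 / 0.6931471808 := expA
      _ ≤ 1 / Real.log 2 := one_div_le_one_div_of_le L_pos L_ub.le
  rw [← xc_mul_L] at h1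
  exact le_of_mul_le_mul_right h1 L_pos

lemma invL_ub : (1:ℝ) / Real.log 2 ≤ 1.4426951 := by
  calc (1:ℝ) / Real.log 2 ≤ 1 / 0.6931471803 :=
        one_div_le_one_div_of_le (by norm_num) L_lb.le
    _ ≤ 1.4426951 := by norm_num

lemma invL_lb : (1.4426950403:ℝ) ≤ 1 / Real.log 2 := by
  calc (1.4426950403:ℝ) ≤ 1 / 0.6931471808 := by norm_num
    _ ≤ 1 / Real.log 2 := one_div_le_one_div_of_le L_pos L_ub.le

lemma Cs_lb : (0.9126:ℝ) ≤ Cs := by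
  have := invL_lb; have := xc_ub; unfold Cs; linarith

lemma Cs_ub : Cs ≤ 0.914 := by
  have := invL_ub; have := xc_lb; unfold Cs; linarith

lemma key1 (x : ℝ) : 0 ≤ PTSoftplus x - softplus x := by
  have hnn : (0:ℝ) < 1 + Real.exp x := by positivity
  unfold PTSoftplus softplus
  split_ifs with h
  · rcases le_or_gt x 0 with hx0 | hx0
    · have h1 : Real.log (1 + Real.exp x) ≤ Real.exp x := by
        have := Real.log_le_sub_one_of_pos hnn
        linarith
      have h2 : Real.exp x ≤ (2:ℝ) ^ x := by
        rw [rpow_eq]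
        exact Real.exp_le_exp.2 (by nlinarith [L_ub, L_pos])
      linarith
    · have h1 : Real.log (1 + Real.exp x) ≤ 1 := by
        rw [Real.log_le_iff_le_exp hnn]
        have e1 : Real.exp x ≤ Real.exp 0.53 :=
          Real.exp_le_exp.2 (le_trans h.le xc_ub)
        have e2 := Real.exp_one_gt_d9
        have e3 := expB
        calc 1 + Real.exp x ≤ 1 + 1.69897 := by linarith
          _ ≤ Real.exp 1 := by linarith
      have h2 : (1:ℝ) ≤ (2:ℝ) ^ x := by
        rw [rpow_eq]
        exact Real.one_le_exp (by positivity)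
      linarith
  · push_neg at h
    have hx_pos : (0:ℝ) < x := lt_of_lt_of_le (by norm_num : (0:ℝ) < 0.5286951)
      (le_trans xc_lb h)
    have e1 : (1:ℝ) ≤ Real.exp x := Real.one_le_exp hx_pos.le
    have e2 : (2:ℝ) ≤ Real.exp Cs := by
      calc (2:ℝ) = Real.exp (Real.log 2) := (Real.exp_log two_pos).symm
        _ ≤ Real.exp Cs := Real.exp_le_exp.2 (by linarith [Cs_lb, L_ub])
    have h1 : Real.log (1 + Real.exp x) ≤ x + Cs := by
      rw [Real.log_le_iff_le_exp hnn, Real.exp_add]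
      nlinarith [Real.exp_pos x]
    linarith

lemma key2 (x : ℝ) : PTSoftplus x - softplus x ≤ Cs := by
  have hnn : (0:ℝ) < 1 + Real.exp x := by positivity
  unfold PTSoftplus softplus
  split_ifs with h
  · rcases le_or_gt x (-0.2) with hx | hx
    · have h1 : 0 ≤ Real.log (1 + Real.exp x) :=
        Real.log_nonneg (by nlinarith [Real.exp_pos x])
      have h2 : (2:ℝ) ^ x ≤ 0.8711 := by
        rw [rpow_eq]
        calc Real.exp (x * Real.log 2) ≤ Real.exp (-(0.2 * 0.6931471803)) :=
              Real.exp_le_exp.2 (by nlinarith [L_lb, L_ub])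
          _ ≤ 0.8711 := expD
      linarith [Cs_lb]
    · have h1 : xc ≤ Real.log (1 + Real.exp x) := by
        have e1 : Real.exp xc ≤ 1 + Real.exp x := by
          have e2 : Real.exp xc ≤ Real.exp 0.53 := Real.exp_le_exp.2 xc_ub
          have e3 : Real.exp (-0.2) ≤ Real.exp x := Real.exp_le_exp.2 hx.le
          have := expB; have := expC
          linarith
        calc xc = Real.log (Real.exp xc) := (Real.log_exp xc).symm
          _ ≤ Real.log (1 + Real.exp x) :=
              Real.log_le_log (Real.exp_pos xc) e1
      have h2 : (2:ℝ) ^ x ≤ 1 / Real.log 2 := by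
        rw [rpow_eq, ← rpow_xc, rpow_eq]
        exact Real.exp_le_exp.2 (by nlinarith [L_pos])
      unfold Cs
      linarith
  · have h1 : x ≤ Real.log (1 + Real.exp x) := by
      calc x = Real.log (Real.exp x) := (Real.log_exp x).symm
        _ ≤ Real.log (1 + Real.exp x) :=
            Real.log_le_log (Real.exp_pos x) (by linarith)
    linarith

end FBoundsAux

theorem f_bounds (x : ℝ) :
    0 ≤ PTSoftplus x - softplus x ∧
    PTSoftplus x - softplus x ≤ 1 / Real.log 2 - Real.logb 2 (1 / Real.log 2) ∧
    |PTSoftplus x - softplus x| ≤ 0.914 := by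
  have k1 := FBoundsAux.key1 x
  have k2 := FBoundsAux.key2 x
  have hCs : (1 / Real.log 2 - Real.logb 2 (1 / Real.log 2)) = Cs := rfl
  refine ⟨k1, by rw [hCs]; exact k2, ?_⟩
  rw [abs_of_nonneg k1]
  exact le_trans k2 FBoundsAux.Cs_ub
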